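/- arXiv:1003.5457 — 3 statements merged into one kernel-verified Lean document; each statement's English description precedes it below -/
import Mathlib

section
/- Let P be a probability measure and Ω a compact subset of the space of finite signed measures (with the topology induced by a family F of measurable functions together with all bounded measurable functions). Then there exists at least one φ-projection of P on Ω, i.e., a measure Q* ∈ Ω with φ(Q*,P) = inf_{Q∈Ω} φ(Q,P). -/
/-!
The divergence is the supremum, over countable measurable partitions `(Aₖ)`, of the partition
divergences `∑ₖ P(Aₖ) φ(Q(Aₖ) / P(Aₖ))`. Jensen's inequality on each cell (for `φ` convex and
lower semicontinuous, via an affine minorant) gives one inequality; for the other, the averages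
of `dQ/dP` over the dyadic partitions `{⌊2ⁿ dQ/dP⌋ = k}` converge to `dQ/dP` almost everywhere,
so Fatou's lemma applies. Each partition divergence is a countable sum of lower semicontinuous
functions of the values `Q(Aₖ)`, which are `τ_F`-continuous since indicators are bounded
measurable functions. Hence the divergence is `τ_F`-lower semicontinuous and attains its
infimum on the compact set `Ω`.
-/

open MeasureTheory Filter Topology Set
open scoped ENNReal NNReal Classical

noncomputable section

variable {X : Type*} [MeasurableSpace X]

/-- The φ-divergence ∫ φ(dQ/dP) dP for a signed measure `Q` absolutely continuous w.r.t. `P`. -/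
def div (φ : ℝ → ℝ≥0∞) (Q : SignedMeasure X) (P : Measure X) : ℝ≥0∞ :=
  ∫⁻ x, φ (Q.rnDeriv P x) ∂P

/-- The φ-divergence, set to `⊤` when `Q` is not absolutely continuous w.r.t. `P`. -/
def divext (φ : ℝ → ℝ≥0∞) (Q : SignedMeasure X) (P : Measure X) : ℝ≥0∞ :=
  if Q ≪ᵥ P.toENNRealVectorMeasure then div φ Q P else ⊤

/-- Integral of a real function against a signed measure. -/
def sint (Q : SignedMeasure X) (f : X → ℝ) : ℝ :=
  ∫ x, f x ∂Q.toJordanDecomposition.posPart - ∫ x, f x ∂Q.toJordanDecomposition.negPart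

/-- The τ_F topology on signed measures: the coarsest topology making `Q ↦ ∫ f dQ`
continuous for every `f` which is bounded measurable or belongs to `F`. -/
def tauTop (F : Set (X → ℝ)) : TopologicalSpace (SignedMeasure X) :=
  ⨅ f ∈ {f : X → ℝ | Measurable f ∧ ∃ C, ∀ x, |f x| ≤ C} ∪ F,
    TopologicalSpace.induced (fun Q => sint Q f) inferInstance

/-- Fenchel–Legendre conjugate of an `[0,∞]`-valued function on ℝ. -/
def conjE (φ : ℝ → ℝ≥0∞) (t : ℝ) : EReal :=
  ⨆ x : ℝ, ((t * x : ℝ) : EReal) - ((φ x : ℝ≥0∞) : EReal)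

/-- The nonnegative part of an extended real, as an element of `[0,∞]`. -/
def etoE (e : EReal) : ℝ≥0∞ := if e = ⊤ then ⊤ else ENNReal.ofReal e.toReal

/-- Extended-real-valued integral of an `EReal`-valued function. -/
def eint (P : Measure X) (g : X → EReal) : EReal :=
  ((∫⁻ x, etoE (g x) ∂P : ℝ≥0∞) : EReal) - ((∫⁻ x, etoE (-(g x)) ∂P : ℝ≥0∞) : EReal)

section ConvexAnalysis

variable {φ : ℝ → ℝ≥0∞}

theorem isClosed_setOf_le_ofReal (hlsc : LowerSemicontinuous φ) :
    IsClosed {p : ℝ × ℝ | 0 ≤ p.2 ∧ φ p.1 ≤ ENNReal.ofReal p.2} :=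
  (isClosed_le continuous_const continuous_snd).inter <|
    hlsc.isClosed_epigraph.preimage (continuous_fst.prodMk (ENNReal.continuous_ofReal.comp
      continuous_snd))

theorem convex_setOf_le_ofReal (hconv : ConvexOn ℝ≥0 univ φ) :
    Convex ℝ {p : ℝ × ℝ | 0 ≤ p.2 ∧ φ p.1 ≤ ENNReal.ofReal p.2} := by
  rintro p ⟨hp₀, hp⟩ q ⟨hq₀, hq⟩ a b ha hb hab
  refine ⟨by simp only [Prod.snd_add, Prod.smul_snd, smul_eq_mul]; positivity, ?_⟩
  lift a to ℝ≥0 using ha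
  lift b to ℝ≥0 using hb
  have hab' : a + b = 1 := by exact_mod_cast hab
  calc φ (a • p + b • q).1 = φ (a • p.1 + b • q.1) := rfl
    _ ≤ a • φ p.1 + b • φ q.1 := hconv.2 (mem_univ _) (mem_univ _) a.2 b.2 hab'
    _ ≤ a • ENNReal.ofReal p.2 + b • ENNReal.ofReal q.2 := by gcongr
    _ = ENNReal.ofReal (a • p + b • q).2 := by
      simp only [Prod.snd_add, Prod.smul_snd, NNReal.smul_def, smul_eq_mul]
      rw [ENNReal.ofReal_add (by positivity) (by positivity), ENNReal.ofReal_mul a.coe_nonneg,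
        ENNReal.ofReal_mul b.coe_nonneg, ENNReal.ofReal_coe_nnreal, ENNReal.ofReal_coe_nnreal,
        ENNReal.smul_def, ENNReal.smul_def, smul_eq_mul, smul_eq_mul]

/-- Hahn–Banach gives `0 ≤ b` since `E` is upward closed; tilting the line slightly then makes
`b > 0`, as `E` and `q` lie in the upper half-plane. -/
theorem exists_nonvertical_separation {E : Set (ℝ × ℝ)} (hconv : Convex ℝ E)
    (hclosed : IsClosed E) (hne : E.Nonempty) (hup : ∀ p ∈ E, ∀ t ≥ p.2, (p.1, t) ∈ E)
    (hE₀ : ∀ p ∈ E, 0 ≤ p.2) {q : ℝ × ℝ} (hq₀ : 0 ≤ q.2) (hq : q ∉ E) :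
    ∃ a b u : ℝ, 0 < b ∧ a * q.1 + b * q.2 < u ∧ ∀ p ∈ E, u < a * p.1 + b * p.2 := by
  obtain ⟨f, u, hfq, hfE⟩ := geometric_hahn_banach_point_closed hconv hclosed hq
  have hf (p : ℝ × ℝ) : f p = f (1, 0) * p.1 + f (0, 1) * p.2 := by
    calc f p = f (p.1 • ((1 : ℝ), (0 : ℝ)) + p.2 • ((0 : ℝ), (1 : ℝ))) := by congr 1; ext <;> simp
      _ = f (1, 0) * p.1 + f (0, 1) * p.2 := by
        rw [map_add, map_smul, map_smul, smul_eq_mul, smul_eq_mul, mul_comm, mul_comm p.2]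
  set a := f (1, 0)
  set b := f (0, 1)
  obtain ⟨p₁, hp₁⟩ := hne
  have hb : 0 ≤ b := by
    by_contra! hb
    have hgap : 0 ≤ (u - f p₁) / b := div_nonneg_of_nonpos (by linarith [hfE p₁ hp₁]) hb.le
    have := hfE _ (hup p₁ hp₁ _ (le_add_of_nonneg_right hgap))
    rw [hf, mul_add, mul_div_cancel₀ _ hb.ne, hf p₁] at this
    linarith
  set ε := (u - f q) / (q.2 + 1)
  have hε : 0 < ε := div_pos (by linarith) (by linarith)
  have hεq : ε * q.2 < u - f q := by
    rw [div_mul_eq_mul_div, div_lt_iff₀ (by linarith)]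
    nlinarith
  refine ⟨a, b + ε, u, by linarith, by rw [add_mul]; linarith [hf q], fun p hp => ?_⟩
  nlinarith [hfE p hp, hf p, hE₀ p hp]

theorem exists_ofReal_affine_le_of_lt (hconv : ConvexOn ℝ≥0 univ φ)
    (hlsc : LowerSemicontinuous φ) {x₀ : ℝ} {c : ℝ≥0∞} (hc : c < φ x₀) :
    ∃ a b : ℝ, (∀ x, ENNReal.ofReal (a * x + b) ≤ φ x) ∧ c ≤ ENNReal.ofReal (a * x₀ + b) := by
  by_cases htop : ∀ x, φ x = ⊤
  · exact ⟨0, c.toReal, fun x => by simp [htop x], by simp [ENNReal.ofReal_toReal hc.ne_top]⟩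
  push Not at htop
  obtain ⟨x₁, hx₁⟩ := htop
  have mem_graph (x : ℝ) (hx : φ x ≠ ⊤) :
      (x, (φ x).toReal) ∈ {p : ℝ × ℝ | 0 ≤ p.2 ∧ φ p.1 ≤ ENNReal.ofReal p.2} :=
    ⟨ENNReal.toReal_nonneg, (ENNReal.ofReal_toReal hx).ge⟩
  obtain ⟨a, b, u, hb, hx₀, hgraph⟩ := exists_nonvertical_separation
    (convex_setOf_le_ofReal hconv) (isClosed_setOf_le_ofReal hlsc) ⟨_, mem_graph x₁ hx₁⟩
    (fun p hp t ht => ⟨hp.1.trans ht, hp.2.trans (ENNReal.ofReal_le_ofReal ht)⟩)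
    (fun p hp => hp.1) (q := (x₀, c.toReal)) ENNReal.toReal_nonneg
    (fun h => (h.2.trans_eq (ENNReal.ofReal_toReal hc.ne_top)).not_gt hc)
  have hline (x : ℝ) : -a / b * x + u / b = (u - a * x) / b := by ring
  refine ⟨-a / b, u / b, fun x => ?_, ?_⟩
  · rcases eq_or_ne (φ x) ⊤ with hx | hx
    · simp [hx]
    rw [hline, ← ENNReal.ofReal_toReal hx]
    refine ENNReal.ofReal_le_ofReal ((div_le_iff₀ hb).2 ?_)
    linarith [hgraph _ (mem_graph x hx)]
  · rw [hline, ← ENNReal.ofReal_toReal hc.ne_top]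
    refine ENNReal.ofReal_le_ofReal ((le_div_iff₀ hb).2 ?_)
    linarith

end ConvexAnalysis

theorem ofReal_integral_le_lintegral_ofReal (μ : Measure X) (f : X → ℝ) :
    ENNReal.ofReal (∫ x, f x ∂μ) ≤ ∫⁻ x, ENNReal.ofReal (f x) ∂μ := by
  by_cases hf : Integrable f μ
  · calc ENNReal.ofReal (∫ x, f x ∂μ)
        ≤ ENNReal.ofReal (∫⁻ x, ENNReal.ofReal (f x) ∂μ).toReal := by
          rw [integral_eq_lintegral_pos_part_sub_lintegral_neg_part hf]
          exact ENNReal.ofReal_le_ofReal (sub_le_self _ ENNReal.toReal_nonneg)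
      _ ≤ ∫⁻ x, ENNReal.ofReal (f x) ∂μ := ENNReal.ofReal_toReal_le
  · simp [integral_undef hf]

theorem ConvexOn.map_integral_le_lintegral {φ : ℝ → ℝ≥0∞} (hconv : ConvexOn ℝ≥0 univ φ)
    (hlsc : LowerSemicontinuous φ) (μ : Measure X) [IsProbabilityMeasure μ] {g : X → ℝ}
    (hg : Integrable g μ) : φ (∫ x, g x ∂μ) ≤ ∫⁻ x, φ (g x) ∂μ := by
  refine le_of_forall_lt_imp_le_of_dense fun c hc => ?_
  obtain ⟨a, b, hab, hc⟩ := exists_ofReal_affine_le_of_lt hconv hlsc hc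
  calc c ≤ ENNReal.ofReal (a * ∫ x, g x ∂μ + b) := hc
    _ = ENNReal.ofReal (∫ x, (a * g x + b) ∂μ) := by
      rw [integral_add (hg.const_mul a) (integrable_const b), integral_const_mul]
      simp
    _ ≤ ∫⁻ x, ENNReal.ofReal (a * g x + b) ∂μ := ofReal_integral_le_lintegral_ofReal μ _
    _ ≤ ∫⁻ x, φ (g x) ∂μ := lintegral_mono fun x => hab (g x)

/-- The value `⊤` at `p = 0 ≠ q` makes a `P`-null cell charged by `Q` witness that `Q` is not
absolutely continuous with respect to `P`. -/
def perspective (φ : ℝ → ℝ≥0∞) (p : ℝ≥0∞) (q : ℝ) : ℝ≥0∞ :=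
  if p = 0 then (if q = 0 then 0 else ⊤) else p * φ (q / p.toReal)

section Perspective

variable {φ : ℝ → ℝ≥0∞}

theorem perspective_zero_zero : perspective φ 0 0 = 0 := by simp [perspective]

theorem lowerSemicontinuous_perspective (hlsc : LowerSemicontinuous φ) {p : ℝ≥0∞} (hp : p ≠ ⊤) :
    LowerSemicontinuous (perspective φ p) := by
  rcases eq_or_ne p 0 with rfl | h0
  · intro q y hy
    rcases eq_or_ne q 0 with rfl | hq
    · exact absurd (perspective_zero_zero (φ := φ) ▸ hy) ENNReal.not_lt_zero
    · filter_upwards [eventually_ne_nhds hq] with z hz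
      simpa [perspective, hz] using hy.trans_le le_top
  · rw [show perspective φ p = fun q => p * φ (q / p.toReal) from funext fun q => if_neg h0]
    exact (ENNReal.continuous_const_mul hp).comp_lowerSemicontinuous
      (hlsc.comp (continuous_id.div_const _)) fun a b hab => mul_le_mul_right hab p

open ProbabilityTheory in
theorem ConvexOn.perspective_le_setLIntegral (hconv : ConvexOn ℝ≥0 univ φ)
    (hlsc : LowerSemicontinuous φ) (P : Measure X) [IsFiniteMeasure P] {g : X → ℝ}
    (hg : Integrable g P) (A : Set X) :
    perspective φ (P A) (∫ x in A, g x ∂P) ≤ ∫⁻ x in A, φ (g x) ∂P := by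
  rcases eq_or_ne (P A) 0 with h0 | h0
  · simp [Measure.restrict_eq_zero.2 h0, perspective_zero_zero, h0]
  have := cond_isProbabilityMeasure (μ := P) h0
  have hjensen :=
    hconv.map_integral_le_lintegral hlsc P[|A] (hg.restrict.smul_measure (by simp [h0]))
  rw [ProbabilityTheory.cond, integral_smul_measure, lintegral_smul_measure, ENNReal.toReal_inv,
    smul_eq_mul, smul_eq_mul, inv_mul_eq_div] at hjensen
  rw [perspective, if_neg h0]
  calc P A * φ ((∫ x in A, g x ∂P) / (P A).toReal)
      ≤ P A * ((P A)⁻¹ * ∫⁻ x in A, φ (g x) ∂P) := by gcongr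
    _ = ∫⁻ x in A, φ (g x) ∂P := by
      rw [← mul_assoc, ENNReal.mul_inv_cancel h0 (measure_ne_top P A), one_mul]

end Perspective

theorem lintegral_eq_tsum_setLIntegral_fiber {ι : Type*} [Countable ι] [MeasurableSpace ι]
    [MeasurableSingletonClass ι] (μ : Measure X) {σ : X → ι} (hσ : Measurable σ)
    (f : X → ℝ≥0∞) : ∫⁻ x, f x ∂μ = ∑' i, ∫⁻ x in σ ⁻¹' {i}, f x ∂μ := by
  rw [← lintegral_iUnion (fun i => hσ (measurableSet_singleton i)) (pairwise_disjoint_fiber σ),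
    ← preimage_iUnion, iUnion_of_singleton, preimage_univ, Measure.restrict_univ]

theorem ae_measure_fiber_ne_zero {ι : Type*} [Countable ι] (μ : Measure X) (σ : X → ι) :
    ∀ᵐ x ∂μ, μ (σ ⁻¹' {σ x}) ≠ 0 := by
  rw [ae_iff]
  refine measure_mono_null (fun x hx => mem_iUnion.2 ⟨σ x, ?_⟩)
    (measure_iUnion_null fun i => ?_ : μ (⋃ i, σ ⁻¹' {i} ∩ {_x | μ (σ ⁻¹' {i}) = 0}) = 0)
  · exact ⟨rfl, not_not.1 hx⟩
  · rcases eq_or_ne (μ (σ ⁻¹' {i})) 0 with h | h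
    · exact measure_mono_null inter_subset_left h
    · simp [h]

theorem MeasureTheory.SignedMeasure.setIntegral_rnDeriv {Q : SignedMeasure X} {P : Measure X}
    [SigmaFinite P] (hQ : Q ≪ᵥ P.toENNRealVectorMeasure) {A : Set X} (hA : MeasurableSet A) :
    ∫ x in A, Q.rnDeriv P x ∂P = Q A := by
  conv_rhs => rw [← SignedMeasure.withDensityᵥ_rnDeriv_eq Q P hQ]
  rw [withDensityᵥ_apply (SignedMeasure.integrable_rnDeriv Q P) hA]

/-- The `φ`-divergence of `Q` from `P` on the σ-algebra generated by the partition `σ`. -/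
def partitionDiv (φ : ℝ → ℝ≥0∞) (P : Measure X) (σ : X → ℤ) (Q : SignedMeasure X) : ℝ≥0∞ :=
  ∑' k : ℤ, perspective φ (P (σ ⁻¹' {k})) (Q (σ ⁻¹' {k}))

theorem ConvexOn.partitionDiv_le_div {φ : ℝ → ℝ≥0∞} (hconv : ConvexOn ℝ≥0 univ φ)
    (hlsc : LowerSemicontinuous φ) (P : Measure X) [IsFiniteMeasure P] {Q : SignedMeasure X}
    (hQ : Q ≪ᵥ P.toENNRealVectorMeasure) {σ : X → ℤ} (hσ : Measurable σ) :
    partitionDiv φ P σ Q ≤ div φ Q P := by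
  have hfiber (k : ℤ) : MeasurableSet (σ ⁻¹' {k}) := hσ (measurableSet_singleton k)
  calc partitionDiv φ P σ Q
      = ∑' k : ℤ, perspective φ (P (σ ⁻¹' {k})) (∫ x in σ ⁻¹' {k}, Q.rnDeriv P x ∂P) := by
        simp only [partitionDiv, SignedMeasure.setIntegral_rnDeriv hQ (hfiber _)]
    _ ≤ ∑' k : ℤ, ∫⁻ x in σ ⁻¹' {k}, φ (Q.rnDeriv P x) ∂P := ENNReal.tsum_le_tsum fun k =>
        hconv.perspective_le_setLIntegral hlsc P (SignedMeasure.integrable_rnDeriv Q P) _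
    _ = div φ Q P := (lintegral_eq_tsum_setLIntegral_fiber P hσ _).symm

theorem exists_partitionDiv_eq_top (φ : ℝ → ℝ≥0∞) (P : Measure X) {Q : SignedMeasure X}
    (hQ : ¬ Q ≪ᵥ P.toENNRealVectorMeasure) :
    ∃ σ : X → ℤ, Measurable σ ∧ partitionDiv φ P σ Q = ⊤ := by
  obtain ⟨s, hPs, hQs⟩ : ∃ s, P.toENNRealVectorMeasure s = 0 ∧ Q s ≠ 0 := by
    simpa [VectorMeasure.AbsolutelyContinuous] using hQ
  have hs : MeasurableSet s := by
    by_contra h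
    exact hQs (VectorMeasure.not_measurable Q h)
  rw [Measure.toENNRealVectorMeasure_apply_measurable hs] at hPs
  set σ : X → ℤ := fun x => if x ∈ s then 0 else 1
  have hfiber : σ ⁻¹' {0} = s := by ext x; by_cases x ∈ s <;> simp [σ, *]
  refine ⟨σ, Measurable.ite hs measurable_const measurable_const, top_unique ?_⟩
  calc ⊤ = perspective φ (P (σ ⁻¹' {0})) (Q (σ ⁻¹' {0})) := by
        simp [perspective, hfiber, hPs, hQs]
    _ ≤ partitionDiv φ P σ Q := ENNReal.le_tsum 0

def cellAverage (P : Measure X) (σ : X → ℤ) (g : X → ℝ) (x : X) : ℝ :=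
  ⨍ y in σ ⁻¹' {σ x}, g y ∂P

theorem measurable_cellAverage (P : Measure X) {σ : X → ℤ} (hσ : Measurable σ) (g : X → ℝ) :
    Measurable (cellAverage P σ g) :=
  (measurable_of_countable fun k : ℤ => ⨍ y in σ ⁻¹' {k}, g y ∂P).comp hσ

theorem lintegral_comp_cellAverage_rnDeriv (φ : ℝ → ℝ≥0∞) (P : Measure X) [IsFiniteMeasure P]
    {Q : SignedMeasure X} (hQ : Q ≪ᵥ P.toENNRealVectorMeasure) {σ : X → ℤ} (hσ : Measurable σ) :
    ∫⁻ x, φ (cellAverage P σ (Q.rnDeriv P) x) ∂P = partitionDiv φ P σ Q := by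
  rw [lintegral_eq_tsum_setLIntegral_fiber P hσ]
  refine tsum_congr fun k => ?_
  have hA := hσ (measurableSet_singleton k)
  rw [setLIntegral_congr_fun hA (fun x (hx : σ x = k) => by rw [cellAverage, hx]),
    setLIntegral_const, ← SignedMeasure.setIntegral_rnDeriv hQ hA]
  rcases eq_or_ne (P (σ ⁻¹' {k})) 0 with h0 | h0
  · simp [h0, Measure.restrict_eq_zero.2 h0, perspective_zero_zero]
  · rw [perspective, if_neg h0, setAverage_eq, measureReal_def, smul_eq_mul, inv_mul_eq_div,
      mul_comm]

def dyadicIndex {α : Type*} (g : α → ℝ) (n : ℕ) (x : α) : ℤ := ⌊g x * 2 ^ n⌋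

theorem measurable_dyadicIndex {g : X → ℝ} (hg : Measurable g) (n : ℕ) :
    Measurable (dyadicIndex g n) :=
  (hg.mul_const _).floor

theorem mem_Icc_of_dyadicIndex_eq {α : Type*} {g : α → ℝ} {n : ℕ} {k : ℤ} {x : α}
    (hx : dyadicIndex g n x = k) : g x ∈ Icc ((k : ℝ) / 2 ^ n) ((k + 1) / 2 ^ n) := by
  rw [dyadicIndex, Int.floor_eq_iff] at hx
  exact ⟨(div_le_iff₀ (by positivity)).2 hx.1, (le_div_iff₀ (by positivity)).2 hx.2.le⟩

theorem dist_cellAverage_dyadicIndex_le (P : Measure X) [IsFiniteMeasure P] {g : X → ℝ}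
    (hg : Integrable g P) (hgm : Measurable g) (n : ℕ) {x : X}
    (hx : P (dyadicIndex g n ⁻¹' {dyadicIndex g n x}) ≠ 0) :
    dist (cellAverage P (dyadicIndex g n) g x) (g x) ≤ (1 / 2) ^ n := by
  set k := dyadicIndex g n x
  have hA := measurable_dyadicIndex hgm n (measurableSet_singleton k)
  have havg : cellAverage P (dyadicIndex g n) g x ∈ Icc ((k : ℝ) / 2 ^ n) ((k + 1) / 2 ^ n) :=
    (convex_Icc _ _).set_average_mem isClosed_Icc hx (measure_ne_top _ _)
      ((ae_restrict_mem hA).mono fun y hy => mem_Icc_of_dyadicIndex_eq hy) hg.integrableOn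
  calc _ ≤ ((k : ℝ) + 1) / 2 ^ n - k / 2 ^ n :=
        Real.dist_le_of_mem_Icc havg (mem_Icc_of_dyadicIndex_eq rfl)
    _ = (1 / 2) ^ n := by rw [← sub_div, add_sub_cancel_left, one_div_pow]

theorem ae_tendsto_cellAverage_dyadicIndex (P : Measure X) [IsFiniteMeasure P] {g : X → ℝ}
    (hg : Integrable g P) (hgm : Measurable g) :
    ∀ᵐ x ∂P, Tendsto (fun n => cellAverage P (dyadicIndex g n) g x) atTop (𝓝 (g x)) := by
  filter_upwards [ae_all_iff.2 fun n => ae_measure_fiber_ne_zero P (dyadicIndex g n)] with x hx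
  exact tendsto_iff_dist_tendsto_zero.2 <| squeeze_zero (fun n => dist_nonneg)
    (fun n => dist_cellAverage_dyadicIndex_le P hg hgm n (hx n))
    (tendsto_pow_atTop_nhds_zero_of_lt_one (by norm_num) (by norm_num))

theorem div_le_iSup_partitionDiv {φ : ℝ → ℝ≥0∞} (hlsc : LowerSemicontinuous φ) (P : Measure X)
    [IsFiniteMeasure P] {Q : SignedMeasure X} (hQ : Q ≪ᵥ P.toENNRealVectorMeasure) :
    div φ Q P ≤ ⨆ σ : {σ : X → ℤ // Measurable σ}, partitionDiv φ P σ Q := by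
  set g := Q.rnDeriv P
  have hgm : Measurable g := SignedMeasure.measurable_rnDeriv Q P
  set m := fun n => cellAverage P (dyadicIndex g n) g
  calc div φ Q P ≤ ∫⁻ x, liminf (fun n => φ (m n x)) atTop ∂P := by
        refine lintegral_mono_ae ?_
        filter_upwards [ae_tendsto_cellAverage_dyadicIndex P (SignedMeasure.integrable_rnDeriv Q P)
          hgm] with x hx
        exact (hlsc.le_liminf (g x)).trans hx.liminf_le_liminf_comp
    _ ≤ liminf (fun n => ∫⁻ x, φ (m n x) ∂P) atTop := lintegral_liminf_le' fun n =>
        (hlsc.measurable.comp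
          (measurable_cellAverage P (measurable_dyadicIndex hgm n) g)).aemeasurable
    _ ≤ ⨆ σ : {σ : X → ℤ // Measurable σ}, partitionDiv φ P σ Q :=
        liminf_le_of_frequently_le' <| Frequently.of_forall fun n =>
          (lintegral_comp_cellAverage_rnDeriv φ P hQ (measurable_dyadicIndex hgm n)).trans_le <|
            le_iSup (fun σ : {σ : X → ℤ // Measurable σ} => partitionDiv φ P σ Q)
              ⟨_, measurable_dyadicIndex hgm n⟩

theorem ConvexOn.divext_eq_iSup_partitionDiv {φ : ℝ → ℝ≥0∞} (hconv : ConvexOn ℝ≥0 univ φ)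
    (hlsc : LowerSemicontinuous φ) (P : Measure X) [IsFiniteMeasure P] (Q : SignedMeasure X) :
    divext φ Q P = ⨆ σ : {σ : X → ℤ // Measurable σ}, partitionDiv φ P σ Q := by
  by_cases hQ : Q ≪ᵥ P.toENNRealVectorMeasure
  · rw [divext, if_pos hQ]
    exact le_antisymm (div_le_iSup_partitionDiv hlsc P hQ)
      (iSup_le fun σ => hconv.partitionDiv_le_div hlsc P hQ σ.2)
  · obtain ⟨σ, hσ, htop⟩ := exists_partitionDiv_eq_top φ P hQ
    rw [divext, if_neg hQ]
    exact (top_unique (htop ▸ le_iSup (fun σ : {σ : X → ℤ // Measurable σ} =>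
      partitionDiv φ P σ Q) ⟨σ, hσ⟩)).symm

section Topology

variable [TopologicalSpace (SignedMeasure X)]

theorem lowerSemicontinuous_partitionDiv {φ : ℝ → ℝ≥0∞} (hlsc : LowerSemicontinuous φ)
    (P : Measure X) [IsFiniteMeasure P]
    (hcont : ∀ A, MeasurableSet A → Continuous fun Q : SignedMeasure X => Q A) {σ : X → ℤ}
    (hσ : Measurable σ) :
    LowerSemicontinuous (partitionDiv φ P σ) :=
  lowerSemicontinuous_tsum fun k => (lowerSemicontinuous_perspective hlsc (measure_ne_top _ _)).comp
    (hcont _ (hσ (measurableSet_singleton k)))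

theorem ConvexOn.lowerSemicontinuous_divext {φ : ℝ → ℝ≥0∞} (hconv : ConvexOn ℝ≥0 univ φ)
    (hlsc : LowerSemicontinuous φ) (P : Measure X) [IsFiniteMeasure P]
    (hcont : ∀ A, MeasurableSet A → Continuous fun Q : SignedMeasure X => Q A) :
    LowerSemicontinuous fun Q => divext φ Q P := by
  simp_rw [hconv.divext_eq_iSup_partitionDiv hlsc P]
  exact lowerSemicontinuous_iSup fun σ => lowerSemicontinuous_partitionDiv hlsc P hcont σ.2

end Topology

theorem sint_indicator_one (Q : SignedMeasure X) {A : Set X} (hA : MeasurableSet A) :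
    sint Q (A.indicator 1) = Q A := by
  rw [sint, integral_indicator_one hA, integral_indicator_one hA]
  conv_rhs => rw [← Q.toSignedMeasure_toJordanDecomposition]
  rw [JordanDecomposition.toSignedMeasure, sub_apply,
    Measure.toSignedMeasure_apply_measurable hA, Measure.toSignedMeasure_apply_measurable hA]

theorem continuous_tauTop_apply (F : Set (X → ℝ)) {A : Set X} (hA : MeasurableSet A) :
    Continuous[tauTop F, _] fun Q : SignedMeasure X => Q A := by
  have hbdd : A.indicator 1 ∈ {f : X → ℝ | Measurable f ∧ ∃ C, ∀ x, |f x| ≤ C} ∪ F :=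
    Or.inl ⟨measurable_one.indicator hA, 1, fun x => by
      by_cases hx : x ∈ A <;> simp [hx]⟩
  simp_rw [← sint_indicator_one _ hA]
  exact continuous_le_dom (iInf₂_le _ hbdd) continuous_induced_dom

theorem stmt9_general (P : Measure X) [IsProbabilityMeasure P]
    (φ : ℝ → ℝ≥0∞)
    (hconv : ConvexOn ℝ≥0 Set.univ φ)
    (hlsc : LowerSemicontinuous φ)
    (F : Set (X → ℝ))
    (Ω : Set (SignedMeasure X)) (hne : Ω.Nonempty)
    (hcomp : @IsCompact _ (tauTop F) Ω) :
    ∃ Qs ∈ Ω, ∀ Q ∈ Ω, divext φ Qs P ≤ divext φ Q P := by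
  let := tauTop F
  have hlscdiv : LowerSemicontinuous fun Q => divext φ Q P :=
    hconv.lowerSemicontinuous_divext hlsc P fun _ => continuous_tauTop_apply F
  obtain ⟨Qs, hQs, hmin⟩ := (hlscdiv.lowerSemicontinuousOn Ω).exists_isMinOn hne hcomp
  exact ⟨Qs, hQs, fun Q hQ => hmin hQ⟩

/-- Let `P` be a probability measure and `Ω` a nonempty compact subset of the
space of finite signed measures, for the topology induced by a family `F` of measurable
functions together with all bounded measurable functions.  Then there exists at least one
φ-projection of `P` on `Ω`. -/
theorem stmt9 (P : Measure X) [IsProbabilityMeasure P]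
    (φ : ℝ → ℝ≥0∞)
    (hconv : ConvexOn ℝ≥0 Set.univ φ)
    (hlsc : LowerSemicontinuous φ)
    (hone : φ 1 = 0)
    (F : Set (X → ℝ)) (hF : ∀ f ∈ F, Measurable f)
    (Ω : Set (SignedMeasure X)) (hne : Ω.Nonempty)
    (hcomp : @IsCompact _ (tauTop F) Ω) :
    ∃ Qs ∈ Ω, ∀ Q ∈ Ω, divext φ Qs P ≤ divext φ Q P :=
  stmt9_general P φ hconv hlsc F Ω hne hcomp
end
end

section
/- Let φ be differentiable, strictly convex with domain endpoints a_φ = 0 and φ'(0) = −∞, satisfying the scaling growth condition. Let Ω be a convex set of finite signed measures containing some Q₀ with φ(Q₀,P) < ∞ and dQ₀/dP > 0 P-a.e. Then any φ-projection Q* of P on Ω satisfies dQ*/dP > 0 P-a.e., i.e., Q* has the same support as P. -/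
open MeasureTheory Filter Topology Set
open scoped ENNReal NNReal Classical

noncomputable section

variable {X : Type*} [MeasurableSpace X]

/-! If `dQs/dP` vanished on a set of positive `P`-measure, move `Qs` towards `Q₀`: the density of
`(1 - t) • Qs + t • Q₀` is `t q₀` wherever `dQs/dP = 0`. Because `φ'(0+) = -∞`, for every `M` we have
`φ s ≤ φ 0 - M s` for small `s > 0`, so on that set the divergence drops by an amount of order `M t`,
while convexity bounds its increase elsewhere by `t φ(Q₀, P)`. Taking `M` large and then `t` small
produces an element of `Ω` with strictly smaller divergence than the projection `Qs`. -/

lemma ConvexOn.ennreal_combo_le {φ : ℝ → ℝ≥0∞} (hφ : ConvexOn ℝ≥0 univ φ) {t : ℝ}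
    (ht₀ : 0 ≤ t) (ht₁ : t ≤ 1) (u v : ℝ) :
    φ ((1 - t) * u + t * v) ≤ ENNReal.ofReal (1 - t) * φ u + ENNReal.ofReal t * φ v := by
  have hsum : (1 - t).toNNReal + t.toNNReal = 1 := by
    rw [← Real.toNNReal_add (by linarith) ht₀]
    norm_num
  simpa [NNReal.smul_def, ENNReal.smul_def, Real.coe_toNNReal _ ht₀,
    Real.coe_toNNReal _ (sub_nonneg.2 ht₁), ENNReal.ofReal] using
    hφ.2 (mem_univ u) (mem_univ v) zero_le zero_le hsum

lemma ConvexOn.ne_top_of_mem_Icc {φ : ℝ → ℝ≥0∞} (hφ : ConvexOn ℝ≥0 univ φ)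
    (h₀ : φ 0 ≠ ⊤) (h₁ : φ 1 ≠ ⊤) {s : ℝ} (hs : s ∈ Icc (0 : ℝ) 1) : φ s ≠ ⊤ := by
  have h := hφ.ennreal_combo_le hs.1 hs.2 0 1
  rw [show (1 - s) * 0 + s * 1 = s by ring] at h
  exact ne_top_of_le_ne_top (by finiteness) h

lemma ConvexOn.toReal_of_ne_top {φ : ℝ → ℝ≥0∞} (hφ : ConvexOn ℝ≥0 univ φ) {S : Set ℝ}
    (hS : Convex ℝ S) (hfin : ∀ x ∈ S, φ x ≠ ⊤) : ConvexOn ℝ S (fun x => (φ x).toReal) := by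
  refine ⟨hS, fun x hx y hy a b ha hb hab => ?_⟩
  have h := hφ.ennreal_combo_le hb (by linarith) x y
  rw [show 1 - b = a by linarith] at h
  have hx' := hfin x hx
  have hy' := hfin y hy
  calc (φ (a • x + b • y)).toReal ≤ (ENNReal.ofReal a * φ x + ENNReal.ofReal b * φ y).toReal :=
        ENNReal.toReal_mono (by finiteness) h
    _ = a * (φ x).toReal + b * (φ y).toReal := by
        rw [ENNReal.toReal_add (by finiteness) (by finiteness), ENNReal.toReal_mul,
          ENNReal.toReal_mul, ENNReal.toReal_ofReal ha, ENNReal.toReal_ofReal hb]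

lemma ConvexOn.eventually_add_mul_le_of_tendsto_atBot {f f' : ℝ → ℝ} {S : Set ℝ} {a : ℝ}
    (hf : ConvexOn ℝ S f) (ha : a ∈ S)
    (hder : ∀ᶠ x in 𝓝[>] a, x ∈ S ∧ HasDerivAt f (f' x) x)
    (hlim : Tendsto f' (𝓝[>] a) atBot) (M : ℝ) :
    ∀ᶠ x in 𝓝[>] a, f x + M * (x - a) ≤ f a := by
  filter_upwards [hder, hlim.eventually (eventually_le_atBot (-M)), self_mem_nhdsWithin]
    with x ⟨hxS, hx⟩ hxM (hax : a < x)
  have hslope := hf.slope_le_of_hasDerivAt ha hxS hax hx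
  rw [slope_def_field, div_le_iff₀ (sub_pos.2 hax)] at hslope
  nlinarith

lemma ConvexOn.eventually_add_ofReal_mul_le {φ : ℝ → ℝ≥0∞} {φ' : ℝ → ℝ}
    (hφ : ConvexOn ℝ≥0 univ φ) (h₀ : φ 0 ≠ ⊤) (h₁ : φ 1 ≠ ⊤)
    (hder : ∀ x ∈ interior {y : ℝ | φ y ≠ ⊤}, HasDerivAt (fun y => (φ y).toReal) (φ' x) x)
    (hlim : Tendsto φ' (𝓝[>] 0) atBot) {M : ℝ} (hM : 0 ≤ M) :
    ∀ᶠ s in 𝓝[>] 0, φ s + ENNReal.ofReal (M * s) ≤ φ 0 := by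
  have hfin : ∀ x ∈ Icc (0 : ℝ) 1, φ x ≠ ⊤ := fun x hx => hφ.ne_top_of_mem_Icc h₀ h₁ hx
  have hIoo : Ioo (0 : ℝ) 1 ⊆ interior {y : ℝ | φ y ≠ ⊤} :=
    interior_Icc (a := (0 : ℝ)) (b := 1) ▸ interior_mono hfin
  have hreal := (hφ.toReal_of_ne_top (convex_Icc 0 1) hfin).eventually_add_mul_le_of_tendsto_atBot
    (left_mem_Icc.2 zero_le_one) (by
      filter_upwards [Ioo_mem_nhdsGT one_pos] with x hx
      exact ⟨Ioo_subset_Icc_self hx, hder x (hIoo hx)⟩) hlim M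
  filter_upwards [hreal, Ioo_mem_nhdsGT one_pos] with s hs hs01
  rw [← ENNReal.ofReal_toReal (hfin s (Ioo_subset_Icc_self hs01)), ← ENNReal.ofReal_toReal h₀,
    ← ENNReal.ofReal_add ENNReal.toReal_nonneg (mul_nonneg hM hs01.1.le)]
  exact ENNReal.ofReal_le_ofReal (by simpa using hs)

lemma lintegral_combo_add_mul_le {P : Measure X} {φ : ℝ → ℝ≥0∞} (hφ : ConvexOn ℝ≥0 univ φ)
    (hφm : Measurable φ) {q q₀ : X → ℝ} (hq₀ : Measurable q₀) {t : ℝ} (ht₀ : 0 ≤ t)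
    (ht₁ : t ≤ 1) {B : Set X} (hB : MeasurableSet B) {c : ℝ≥0∞}
    (hc : ∀ x ∈ B, φ ((1 - t) * q x + t * q₀ x) + c ≤ φ (q x)) :
    ∫⁻ x, φ ((1 - t) * q x + t * q₀ x) ∂P + c * P B ≤
      ∫⁻ x, φ (q x) ∂P + ENNReal.ofReal t * ∫⁻ x, φ (q₀ x) ∂P := by
  have hpt : ∀ x, φ ((1 - t) * q x + t * q₀ x) + B.indicator (fun _ => c) x ≤
      φ (q x) + ENNReal.ofReal t * φ (q₀ x) := by
    intro x
    by_cases hx : x ∈ B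
    · rw [indicator_of_mem hx]
      exact (hc x hx).trans le_self_add
    · rw [indicator_of_notMem hx, add_zero]
      calc φ ((1 - t) * q x + t * q₀ x)
          ≤ ENNReal.ofReal (1 - t) * φ (q x) + ENNReal.ofReal t * φ (q₀ x) :=
            hφ.ennreal_combo_le ht₀ ht₁ _ _
        _ ≤ φ (q x) + ENNReal.ofReal t * φ (q₀ x) := by
            gcongr
            exact mul_le_of_le_one_left zero_le (ENNReal.ofReal_le_one.2 (by linarith))
  calc ∫⁻ x, φ ((1 - t) * q x + t * q₀ x) ∂P + c * P B
      = ∫⁻ x, (φ ((1 - t) * q x + t * q₀ x) + B.indicator (fun _ => c) x) ∂P := by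
        rw [lintegral_add_right _ (measurable_const.indicator hB), lintegral_indicator_const hB]
    _ ≤ ∫⁻ x, (φ (q x) + ENNReal.ofReal t * φ (q₀ x)) ∂P := lintegral_mono hpt
    _ = ∫⁻ x, φ (q x) ∂P + ENNReal.ofReal t * ∫⁻ x, φ (q₀ x) ∂P := by
        have hm : Measurable fun x => φ (q₀ x) := hφm.comp hq₀
        rw [lintegral_add_right _ (hm.const_mul _), lintegral_const_mul _ hm]

lemma exists_nat_measure_eq_zero_and_mem_Icc_ne_zero {P : Measure X} {q q₀ : X → ℝ}
    (hzero : P {x | q x = 0} ≠ 0) (hpos₀ : ∀ᵐ x ∂P, 0 < q₀ x) :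
    ∃ N : ℕ, P {x | q x = 0 ∧ q₀ x ∈ Icc ((N : ℝ) + 1)⁻¹ ((N : ℝ) + 1)} ≠ 0 := by
  have hcover : ∀ y : ℝ, 0 < y → ∃ N : ℕ, y ∈ Icc ((N : ℝ) + 1)⁻¹ ((N : ℝ) + 1) := by
    intro y hy
    obtain ⟨N, hN⟩ := exists_nat_ge (max y y⁻¹)
    refine ⟨N, ?_, by linarith [le_max_left y y⁻¹]⟩
    rw [inv_le_comm₀ (by positivity) hy]
    linarith [le_max_right y y⁻¹]
  have hunion : P (⋃ N : ℕ, {x | q x = 0 ∧ q₀ x ∈ Icc ((N : ℝ) + 1)⁻¹ ((N : ℝ) + 1)}) ≠ 0 := by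
    refine fun h => hzero (measure_mono_null (fun x (hx : q x = 0) => ?_)
      (measure_union_null h (ae_iff.1 hpos₀)))
    by_cases hx₀ : 0 < q₀ x
    · obtain ⟨N, hN⟩ := hcover _ hx₀
      exact Or.inl (mem_iUnion.2 ⟨N, hx, hN⟩)
    · exact Or.inr hx₀
  obtain ⟨N, hN⟩ := exists_measure_pos_of_not_measure_iUnion_null hunion
  exact ⟨N, hN.ne'⟩

lemma exists_lintegral_combo_lt {P : Measure X} {φ : ℝ → ℝ≥0∞} (hφ : ConvexOn ℝ≥0 univ φ)
    (hφm : Measurable φ)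
    (hsteep : ∀ M : ℝ, 0 ≤ M → ∀ᶠ s in 𝓝[>] 0, φ s + ENNReal.ofReal (M * s) ≤ φ 0)
    {q q₀ : X → ℝ} (hq : Measurable q) (hq₀ : Measurable q₀)
    (hfin : ∫⁻ x, φ (q x) ∂P ≠ ⊤) (hfin₀ : ∫⁻ x, φ (q₀ x) ∂P ≠ ⊤)
    (hzero : P {x | q x = 0} ≠ 0) (hpos₀ : ∀ᵐ x ∂P, 0 < q₀ x) :
    ∃ t ∈ Ioc (0 : ℝ) 1, ∫⁻ x, φ ((1 - t) * q x + t * q₀ x) ∂P < ∫⁻ x, φ (q x) ∂P := by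
  obtain ⟨N, hB⟩ := exists_nat_measure_eq_zero_and_mem_Icc_ne_zero hzero hpos₀
  set B := {x | q x = 0 ∧ q₀ x ∈ Icc ((N : ℝ) + 1)⁻¹ ((N : ℝ) + 1)}
  have hBm : MeasurableSet B :=
    (hq (measurableSet_singleton 0)).inter (hq₀ measurableSet_Icc)
  -- The gain `n t P(B)` on `B` must beat the loss `t ∫ φ(q₀)` bounded by convexity off `B`.
  obtain ⟨n, hn⟩ := ENNReal.exists_nat_mul_gt hB hfin₀
  obtain ⟨s₀, hs₀, hsteep₀⟩ : ∃ s₀ ∈ Ioc (0 : ℝ) 1, ∀ s ∈ Ioc 0 s₀,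
      φ s + ENNReal.ofReal (((N : ℝ) + 1) * n * s) ≤ φ 0 := by
    obtain ⟨u, hu, hsub⟩ := mem_nhdsGT_iff_exists_Ioc_subset.1
      ((hsteep (((N : ℝ) + 1) * n) (by positivity)).and (Ioc_mem_nhdsGT one_pos))
    exact ⟨u, ⟨hu, (hsub ⟨hu, le_rfl⟩).2.2⟩, fun s hs => (hsub hs).1⟩
  have hN : (0 : ℝ) < N + 1 := by positivity
  set t := s₀ / ((N : ℝ) + 1)
  have ht : t ∈ Ioc (0 : ℝ) 1 :=
    ⟨div_pos hs₀.1 hN, (div_le_self hs₀.1.le (le_add_of_nonneg_left N.cast_nonneg)).trans hs₀.2⟩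
  have hc : ∀ x ∈ B, φ ((1 - t) * q x + t * q₀ x) + ENNReal.ofReal (n * t) ≤ φ (q x) := by
    rintro x ⟨hqx, hlo, hhi⟩
    have hq₀x : 1 ≤ ((N : ℝ) + 1) * q₀ x := by rwa [inv_le_iff_one_le_mul₀' hN] at hlo
    rw [hqx, mul_zero, zero_add]
    calc φ (t * q₀ x) + ENNReal.ofReal (n * t)
        ≤ φ (t * q₀ x) + ENNReal.ofReal (((N : ℝ) + 1) * n * (t * q₀ x)) := by
          refine add_le_add_right (ENNReal.ofReal_le_ofReal ?_) _
          calc (n : ℝ) * t = n * t * 1 := (mul_one _).symm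
            _ ≤ n * t * (((N : ℝ) + 1) * q₀ x) :=
              mul_le_mul_of_nonneg_left hq₀x (mul_nonneg n.cast_nonneg ht.1.le)
            _ = ((N : ℝ) + 1) * n * (t * q₀ x) := by ring
      _ ≤ φ 0 := hsteep₀ _ ⟨by nlinarith [ht.1], by
          rw [← div_mul_cancel₀ s₀ hN.ne']
          exact mul_le_mul_of_nonneg_left hhi ht.1.le⟩
  have hgain : ENNReal.ofReal t * ∫⁻ x, φ (q₀ x) ∂P < ENNReal.ofReal (n * t) * P B := by
    rw [mul_comm (n : ℝ), ENNReal.ofReal_mul ht.1.le, ENNReal.ofReal_natCast, mul_assoc]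
    exact ENNReal.mul_lt_mul_right (ENNReal.ofReal_pos.2 ht.1).ne' ENNReal.ofReal_ne_top hn
  refine ⟨t, ht, lt_of_not_ge fun hge =>
    lt_irrefl (∫⁻ x, φ (q x) ∂P + ENNReal.ofReal (n * t) * P B) ?_⟩
  calc ∫⁻ x, φ (q x) ∂P + ENNReal.ofReal (n * t) * P B
      ≤ ∫⁻ x, φ ((1 - t) * q x + t * q₀ x) ∂P + ENNReal.ofReal (n * t) * P B := by gcongr
    _ ≤ ∫⁻ x, φ (q x) ∂P + ENNReal.ofReal t * ∫⁻ x, φ (q₀ x) ∂P :=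
        lintegral_combo_add_mul_le hφ hφm hq₀ ht.1.le ht.2 hBm hc
    _ < ∫⁻ x, φ (q x) ∂P + ENNReal.ofReal (n * t) * P B := ENNReal.add_lt_add_left hfin hgain

lemma divext_ne_top_iff {φ : ℝ → ℝ≥0∞} {Q : SignedMeasure X} {P : Measure X} :
    divext φ Q P ≠ ⊤ ↔ Q ≪ᵥ P.toENNRealVectorMeasure ∧ div φ Q P ≠ ⊤ := by
  unfold divext
  split_ifs with h <;> simp [h]

lemma divext_eq_div {φ : ℝ → ℝ≥0∞} {Q : SignedMeasure X} {P : Measure X}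
    (h : Q ≪ᵥ P.toENNRealVectorMeasure) : divext φ Q P = div φ Q P :=
  if_pos h

lemma div_smul_add_smul (φ : ℝ → ℝ≥0∞) (Q R : SignedMeasure X) (P : Measure X)
    [SigmaFinite P] (a b : ℝ) :
    div φ (a • Q + b • R) P = ∫⁻ x, φ (a * Q.rnDeriv P x + b * R.rnDeriv P x) ∂P := by
  refine lintegral_congr_ae ?_
  filter_upwards [SignedMeasure.rnDeriv_add (a • Q) (b • R) P,
    SignedMeasure.rnDeriv_smul Q P a, SignedMeasure.rnDeriv_smul R P b] with x hadd hQ hR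
  rw [hadd, Pi.add_apply, hQ, hR]
  rfl

theorem stmt16_general (P : Measure X) [IsProbabilityMeasure P]
    (φ : ℝ → ℝ≥0∞) (φ' : ℝ → ℝ)
    (hconv : ConvexOn ℝ≥0 Set.univ φ)
    (hlsc : LowerSemicontinuous φ)
    (hone : φ 1 = 0)
    (hdom : {y : ℝ | φ y ≠ ⊤} ⊆ Ici (0 : ℝ))
    (hderiv : ∀ x ∈ interior {y : ℝ | φ y ≠ ⊤},
      HasDerivAt (fun y => (φ y).toReal) (φ' x) x)
    (hlim : Tendsto φ' (𝓝[>] (0 : ℝ)) atBot)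
    (Ω : Set (SignedMeasure X)) (hΩ : Convex ℝ Ω)
    (Q₀ : SignedMeasure X) (hQ₀ : Q₀ ∈ Ω)
    (hQ₀fin : divext φ Q₀ P ≠ ⊤)
    (hQ₀pos : ∀ᵐ x ∂P, 0 < Q₀.rnDeriv P x)
    (Qs : SignedMeasure X) (hQs : Qs ∈ Ω)
    (hproj : ∀ Q ∈ Ω, divext φ Qs P ≤ divext φ Q P) :
    ∀ᵐ x ∂P, 0 < Qs.rnDeriv P x := by
  by_contra hpos
  obtain ⟨hQ₀ac, hQ₀div⟩ := divext_ne_top_iff.1 hQ₀fin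
  obtain ⟨hQsac, hQsdiv⟩ := divext_ne_top_iff.1 (ne_top_of_le_ne_top hQ₀fin (hproj Q₀ hQ₀))
  have hφm : Measurable φ := hlsc.measurable
  have hq : Measurable (Qs.rnDeriv P) := Qs.measurable_rnDeriv P
  have hfin : ∀ᵐ x ∂P, φ (Qs.rnDeriv P x) ≠ ⊤ :=
    (ae_lt_top (hφm.comp hq) hQsdiv).mono fun x hx => hx.ne
  have hzero : P {x | Qs.rnDeriv P x = 0} ≠ 0 := fun h => hpos <| by
    filter_upwards [hfin, measure_eq_zero_iff_ae_notMem.1 h] with x hx hx₀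
    exact (hdom hx).lt_of_ne' hx₀
  have hφ₀ : φ 0 ≠ ⊤ := fun h => hzero <|
    measure_mono_null (fun x (hx : Qs.rnDeriv P x = 0) => by simp [hx, h]) (ae_iff.1 hfin)
  have hφ₁ : φ 1 ≠ ⊤ := by simp [hone]
  obtain ⟨t, ⟨ht₀, ht₁⟩, hlt⟩ := exists_lintegral_combo_lt hconv hφm
    (fun M hM => hconv.eventually_add_ofReal_mul_le hφ₀ hφ₁ hderiv hlim hM) hq
    (Q₀.measurable_rnDeriv P) hQsdiv hQ₀div hzero hQ₀pos
  have hle := hproj _ (hΩ hQs hQ₀ (sub_nonneg.2 ht₁) ht₀.le (sub_add_cancel 1 t))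
  rw [divext_eq_div hQsac, divext_eq_div (hQsac.smul.add hQ₀ac.smul), div_smul_add_smul] at hle
  exact hle.not_gt hlt

/-- Let `φ` be differentiable, strictly convex with domain left endpoint
`a_φ = 0` and `φ'(0) = −∞` (i.e. `φ'(x) → −∞` as `x ↓ 0`), satisfying the scaling growth
condition.  Let `Ω` be a convex set of finite signed measures containing some `Q₀` with
`φ(Q₀,P) < ∞` and `dQ₀/dP > 0` `P`-a.e.  Then any φ-projection `Qs` of `P` on `Ω` satisfies
`dQs/dP > 0` `P`-a.e., i.e. `Qs` has the same support as `P`. -/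
theorem stmt16 (P : Measure X) [IsProbabilityMeasure P]
    (φ : ℝ → ℝ≥0∞) (φ' : ℝ → ℝ)
    (hconv : ConvexOn ℝ≥0 Set.univ φ)
    (hlsc : LowerSemicontinuous φ)
    (hone : φ 1 = 0)
    (hdom : {y : ℝ | φ y ≠ ⊤} ⊆ Ici (0 : ℝ))
    (hinf : sInf {y : ℝ | φ y ≠ ⊤} = 0)
    (hderiv : ∀ x ∈ interior {y : ℝ | φ y ≠ ⊤},
      HasDerivAt (fun y => (φ y).toReal) (φ' x) x)
    (hstrict : StrictConvexOn ℝ (interior {y : ℝ | φ y ≠ ⊤}) (fun y => (φ y).toReal))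
    (hlim : Tendsto φ' (𝓝[>] (0 : ℝ)) atBot)
    (hgrow : ∃ δ : ℝ, δ ∈ Ioo (0 : ℝ) 1 ∧ ∀ c ∈ Icc (1 - δ) (1 + δ),
      ∃ c₁ c₂ c₃ : ℝ≥0, ∀ x : ℝ,
        φ (c * x) ≤ (c₁ : ℝ≥0∞) * φ x + (c₂ : ℝ≥0∞) * ENNReal.ofReal |x| + (c₃ : ℝ≥0∞))
    (Ω : Set (SignedMeasure X)) (hΩ : Convex ℝ Ω)
    (Q₀ : SignedMeasure X) (hQ₀ : Q₀ ∈ Ω)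
    (hQ₀fin : divext φ Q₀ P ≠ ⊤)
    (hQ₀pos : ∀ᵐ x ∂P, 0 < Q₀.rnDeriv P x)
    (Qs : SignedMeasure X) (hQs : Qs ∈ Ω)
    (hproj : ∀ Q ∈ Ω, divext φ Qs P ≤ divext φ Q P) :
    ∀ᵐ x ∂P, 0 < Qs.rnDeriv P x :=
  stmt16_general P φ φ' hconv hlsc hone hdom hderiv hlim Ω hΩ Q₀ hQ₀ hQ₀fin hQ₀pos Qs hQs hproj
end
end

section
/- (Dual representation / one-point attainment.) Let φ be a proper closed convex function with φ(1)=0, differentiable on the interior of its domain, and let Q ≪ P be a finite signed measure with φ(Q,P) = ∫ φ(q) dP < ∞ where q := dQ/dP, such that ∫ |φ'(q)| d|Q| < ∞. Then, with f̄ := φ'(q), one has ∫ f̄ dQ − ∫ φ*(f̄) dP = φ(Q,P), and for every measurable f with ∫|f| d|Q| < ∞ one has ∫ f dQ − ∫ φ*(f) dP ≤ φ(Q,P). Hence φ(Q,P) = sup over such f of (∫ f dQ − ∫ φ*(f) dP), attained at f̄. -/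
/-!
Pointwise, Fenchel's inequality gives `φ*(f) ≥ f q - φ(q)`, and equality holds at `f = φ'(q)`
because a derivative of the convex function `φ` (within its domain) is a subgradient. Since
`∫ f dQ = ∫ f q dP`, integrating these against `P` yields `∫ f dQ - ∫ φ*(f) dP ≤ ∫ φ(q) dP`
with equality at `f̄ = φ'(q)`; the supremum is therefore attained at `f̄`.
-/

open MeasureTheory Filter Topology Set
open scoped ENNReal NNReal Classical

noncomputable section

variable {X : Type*} [MeasurableSpace X]

section Convexity

variable {E : Type*} [AddCommGroup E] [Module ℝ E] {φ : E → ℝ≥0∞}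

lemma ConvexOn.apply_add_le_ofReal_mul (hφ : ConvexOn ℝ≥0 univ φ) (x y : E) {a b : ℝ}
    (ha : 0 ≤ a) (hb : 0 ≤ b) (hab : a + b = 1) :
    φ (a • x + b • y) ≤ ENNReal.ofReal a * φ x + ENNReal.ofReal b * φ y := by
  have hab' : a.toNNReal + b.toNNReal = 1 := by
    rw [← Real.toNNReal_add ha hb, hab, Real.toNNReal_one]
  have h := hφ.2 (mem_univ x) (mem_univ y) zero_le zero_le hab'
  simp only [NNReal.smul_def, Real.coe_toNNReal _ ha, Real.coe_toNNReal _ hb,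
    ENNReal.smul_def, smul_eq_mul] at h
  exact h

lemma ConvexOn.convex_setOf_ne_top (hφ : ConvexOn ℝ≥0 univ φ) : Convex ℝ {x | φ x ≠ ⊤} :=
  fun x hx y hy _ _ ha hb hab => ne_top_of_le_ne_top
    (ENNReal.add_ne_top.2 ⟨ENNReal.mul_ne_top ENNReal.ofReal_ne_top hx,
      ENNReal.mul_ne_top ENNReal.ofReal_ne_top hy⟩)
    (hφ.apply_add_le_ofReal_mul x y ha hb hab)

lemma ConvexOn.toReal_on_ne_top (hφ : ConvexOn ℝ≥0 univ φ) :
    ConvexOn ℝ {x | φ x ≠ ⊤} (fun x => (φ x).toReal) := by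
  refine ⟨hφ.convex_setOf_ne_top, fun x hx y hy a b ha hb hab => ?_⟩
  have hxt : ENNReal.ofReal a * φ x ≠ ⊤ := ENNReal.mul_ne_top ENNReal.ofReal_ne_top hx
  have hyt : ENNReal.ofReal b * φ y ≠ ⊤ := ENNReal.mul_ne_top ENNReal.ofReal_ne_top hy
  calc (φ (a • x + b • y)).toReal
      ≤ (ENNReal.ofReal a * φ x + ENNReal.ofReal b * φ y).toReal :=
        ENNReal.toReal_mono (ENNReal.add_ne_top.2 ⟨hxt, hyt⟩)
          (hφ.apply_add_le_ofReal_mul x y ha hb hab)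
    _ = a • (φ x).toReal + b • (φ y).toReal := by
        rw [ENNReal.toReal_add hxt hyt, ENNReal.toReal_mul, ENNReal.toReal_mul,
          ENNReal.toReal_ofReal ha, ENNReal.toReal_ofReal hb, smul_eq_mul, smul_eq_mul]

end Convexity

lemma ConvexOn.add_mul_sub_le_of_hasDerivWithinAt {S : Set ℝ} {f : ℝ → ℝ} {x y f' : ℝ}
    (hf : ConvexOn ℝ S f) (hx : x ∈ S) (hy : y ∈ S) (hf' : HasDerivWithinAt f f' S x) :
    f x + f' * (y - x) ≤ f y := by
  rcases lt_trichotomy x y with hxy | rfl | hyx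
  · have := hf.le_slope_of_hasDerivWithinAt hx hy hxy hf'
    rw [slope_def_field, le_div_iff₀ (sub_pos.2 hxy)] at this
    linarith
  · simp
  · have := hf.slope_le_of_hasDerivWithinAt hy hx hyx hf'
    rw [slope_def_field, div_le_iff₀ (sub_pos.2 hyx)] at this
    linarith

lemma le_conjE (φ : ℝ → ℝ≥0∞) (t x : ℝ) : ((t * x : ℝ) : EReal) - φ x ≤ conjE φ t :=
  le_iSup (fun x => ((t * x : ℝ) : EReal) - φ x) x

section Conjugate

variable {φ : ℝ → ℝ≥0∞}

lemma coe_sub_le_conjE {t x : ℝ} (hx : φ x ≠ ⊤) :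
    ((t * x - (φ x).toReal : ℝ) : EReal) ≤ conjE φ t := by
  simpa only [EReal.coe_sub, EReal.coe_ennreal_toReal hx] using le_conjE φ t x

lemma conjE_eq_of_isSubgradient {t x : ℝ} (hx : φ x ≠ ⊤)
    (hsub : ∀ y, φ y ≠ ⊤ → (φ x).toReal + t * (y - x) ≤ (φ y).toReal) :
    conjE φ t = ((t * x - (φ x).toReal : ℝ) : EReal) := by
  refine le_antisymm (iSup_le fun y => ?_) (coe_sub_le_conjE hx)
  rcases eq_or_ne (φ y) ⊤ with hy | hy
  · simp [hy]
  · rw [← EReal.coe_ennreal_toReal hy, ← EReal.coe_sub, EReal.coe_le_coe_iff]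
    linarith [hsub y hy]

lemma conjE_eq_of_hasDerivWithinAt {φ' : ℝ → ℝ} (hφ : ConvexOn ℝ≥0 univ φ) {x : ℝ}
    (hx : φ x ≠ ⊤)
    (hφ' : HasDerivWithinAt (fun y => (φ y).toReal) (φ' x) {y | φ y ≠ ⊤} x) :
    conjE φ (φ' x) = ((φ' x * x - (φ x).toReal : ℝ) : EReal) :=
  conjE_eq_of_isSubgradient hx fun _ hy =>
    hφ.toReal_on_ne_top.add_mul_sub_le_of_hasDerivWithinAt hx hy hφ'

end Conjugate

section SignedIntegral

variable {P : Measure X} [SigmaFinite P] {Q : SignedMeasure X}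

lemma toJordanDecomposition_parts_eq_withDensity_rnDeriv (hac : Q ≪ᵥ P.toENNRealVectorMeasure) :
    Q.toJordanDecomposition.posPart = P.withDensity (fun x => ENNReal.ofReal (Q.rnDeriv P x)) ∧
      Q.toJordanDecomposition.negPart =
        P.withDensity (fun x => ENNReal.ofReal (-Q.rnDeriv P x)) := by
  have hadd : Q = 0 + P.withDensityᵥ (Q.rnDeriv P) := by
    rw [zero_add, SignedMeasure.withDensityᵥ_rnDeriv_eq Q P hac]
  rw [SignedMeasure.toJordanDecomposition_eq_of_eq_add_withDensity
    (SignedMeasure.measurable_rnDeriv Q P) (SignedMeasure.integrable_rnDeriv Q P)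
    VectorMeasure.MutuallySingular.zero_left hadd]
  simp [SignedMeasure.toJordanDecomposition_zero]

lemma mul_eq_toNNReal_smul_sub_toNNReal_neg_smul (a q : ℝ) :
    a * q = q.toNNReal • a - (-q).toNNReal • a := by
  rw [NNReal.smul_def, NNReal.smul_def, Real.coe_toNNReal', Real.coe_toNNReal', smul_eq_mul,
    smul_eq_mul, ← sub_mul, max_zero_sub_max_neg_zero_eq_self, mul_comm]

lemma integrable_toNNReal_rnDeriv_smul (hac : Q ≪ᵥ P.toENNRealVectorMeasure) {f : X → ℝ}
    (hf : Integrable f Q.totalVariation) :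
    Integrable (fun x => (Q.rnDeriv P x).toNNReal • f x) P ∧
      Integrable (fun x => (-Q.rnDeriv P x).toNNReal • f x) P := by
  obtain ⟨hpos, hneg⟩ := toJordanDecomposition_parts_eq_withDensity_rnDeriv hac
  have hq := SignedMeasure.measurable_rnDeriv Q P
  rw [SignedMeasure.totalVariation, integrable_add_measure, hpos, hneg] at hf
  exact ⟨(integrable_withDensity_iff_integrable_smul hq.real_toNNReal).1 hf.1,
    (integrable_withDensity_iff_integrable_smul hq.neg.real_toNNReal).1 hf.2⟩

lemma integrable_mul_rnDeriv (hac : Q ≪ᵥ P.toENNRealVectorMeasure) {f : X → ℝ}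
    (hf : Integrable f Q.totalVariation) :
    Integrable (fun x => f x * Q.rnDeriv P x) P := by
  obtain ⟨hpos, hneg⟩ := integrable_toNNReal_rnDeriv_smul hac hf
  exact (hpos.sub hneg).congr
    (.of_forall fun x => (mul_eq_toNNReal_smul_sub_toNNReal_neg_smul _ _).symm)

lemma sint_eq_integral_mul_rnDeriv (hac : Q ≪ᵥ P.toENNRealVectorMeasure) {f : X → ℝ}
    (hf : Integrable f Q.totalVariation) :
    sint Q f = ∫ x, f x * Q.rnDeriv P x ∂P := by
  obtain ⟨hpos, hneg⟩ := toJordanDecomposition_parts_eq_withDensity_rnDeriv hac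
  obtain ⟨hipos, hineg⟩ := integrable_toNNReal_rnDeriv_smul hac hf
  have hq := SignedMeasure.measurable_rnDeriv Q P
  simp only [mul_eq_toNNReal_smul_sub_toNNReal_neg_smul]
  rw [sint, hpos, hneg, integral_sub hipos hineg]
  exact congrArg₂ _ (integral_withDensity_eq_integral_smul hq.real_toNNReal f)
    (integral_withDensity_eq_integral_smul hq.neg.real_toNNReal f)

end SignedIntegral

section ExtendedIntegral

variable {μ : Measure X}

lemma etoE_coe (r : ℝ) : etoE (r : EReal) = ENNReal.ofReal r := by
  simp [etoE]

lemma etoE_mono : Monotone etoE := by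
  intro a b hab
  rcases eq_or_ne b ⊤ with rfl | hb
  · simp [etoE]
  rcases eq_or_ne a ⊥ with rfl | ha
  · simp [etoE]
  rw [etoE, etoE, if_neg (ne_top_of_le_ne_top hb hab), if_neg hb]
  exact ENNReal.ofReal_le_ofReal (EReal.toReal_le_toReal hab ha hb)

lemma coe_integral_eq_lintegral_sub {u : X → ℝ} (hu : Integrable u μ) :
    ((∫ x, u x ∂μ : ℝ) : EReal) =
      ((∫⁻ x, ENNReal.ofReal (u x) ∂μ : ℝ≥0∞) : EReal) - (∫⁻ x, ENNReal.ofReal (-u x) ∂μ) := by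
  rw [integral_eq_lintegral_pos_part_sub_lintegral_neg_part hu, EReal.coe_sub,
    EReal.coe_ennreal_toReal hu.lintegral_lt_top.ne,
    EReal.coe_ennreal_toReal (x := ∫⁻ x, ENNReal.ofReal (-u x) ∂μ) hu.neg.lintegral_lt_top.ne]

lemma eint_eq_integral {g : X → EReal} {u : X → ℝ} (hu : Integrable u μ)
    (hg : ∀ᵐ x ∂μ, g x = u x) : eint μ g = ((∫ x, u x ∂μ : ℝ) : EReal) := by
  rw [eint, coe_integral_eq_lintegral_sub hu]
  congr 2 <;> refine lintegral_congr_ae (hg.mono fun x hx => ?_)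
  · simp only [hx, etoE_coe]
  · simp only [hx, ← EReal.coe_neg, etoE_coe]

lemma integral_le_eint {g : X → EReal} {u : X → ℝ} (hu : Integrable u μ)
    (hg : ∀ᵐ x ∂μ, (u x : EReal) ≤ g x) : ((∫ x, u x ∂μ : ℝ) : EReal) ≤ eint μ g := by
  rw [eint, coe_integral_eq_lintegral_sub hu]
  refine EReal.sub_le_sub (EReal.coe_ennreal_le_coe_ennreal_iff.2 ?_)
    (EReal.coe_ennreal_le_coe_ennreal_iff.2 ?_) <;>
    refine lintegral_mono_ae (hg.mono fun x hx => ?_)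
  · rw [← etoE_coe]; exact etoE_mono hx
  · rw [← etoE_coe, EReal.coe_neg]; exact etoE_mono (EReal.neg_le_neg_iff.2 hx)

end ExtendedIntegral

section Duality

variable {P : Measure X} {φ : ℝ → ℝ≥0∞} {Q : SignedMeasure X}

lemma ae_ne_top_of_div_ne_top (hφ : Measurable φ) (hfin : div φ Q P ≠ ⊤) :
    ∀ᵐ x ∂P, φ (Q.rnDeriv P x) ≠ ⊤ :=
  (ae_lt_top (hφ.comp (SignedMeasure.measurable_rnDeriv Q P)) hfin).mono fun _ h => h.ne

lemma integrable_toReal_comp_rnDeriv (hφ : Measurable φ) (hfin : div φ Q P ≠ ⊤) :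
    Integrable (fun x => (φ (Q.rnDeriv P x)).toReal) P :=
  integrable_toReal_of_lintegral_ne_top
    (hφ.comp (SignedMeasure.measurable_rnDeriv Q P)).aemeasurable hfin

lemma coe_div_eq_integral (hφ : Measurable φ) (hfin : div φ Q P ≠ ⊤) :
    (div φ Q P : EReal) = ((∫ x, (φ (Q.rnDeriv P x)).toReal ∂P : ℝ) : EReal) := by
  have hm : Measurable fun x => φ (Q.rnDeriv P x) :=
    hφ.comp (SignedMeasure.measurable_rnDeriv Q P)
  rw [integral_toReal hm.aemeasurable (ae_lt_top hm hfin), ← div, EReal.coe_ennreal_toReal hfin]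

variable [SigmaFinite P]

theorem sint_sub_eint_conjE_le_div (hφ : Measurable φ) (hac : Q ≪ᵥ P.toENNRealVectorMeasure)
    (hfin : div φ Q P ≠ ⊤) {f : X → ℝ} (hf : Integrable f Q.totalVariation) :
    ((sint Q f : ℝ) : EReal) - eint P (fun x => conjE φ (f x)) ≤ div φ Q P := by
  have hd := integrable_toReal_comp_rnDeriv hφ hfin
  have hfq := integrable_mul_rnDeriv hac hf
  have hfenchel : ∀ᵐ x ∂P,
      ((f x * Q.rnDeriv P x - (φ (Q.rnDeriv P x)).toReal : ℝ) : EReal) ≤ conjE φ (f x) :=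
    (ae_ne_top_of_div_ne_top hφ hfin).mono fun _ hx => coe_sub_le_conjE hx
  have hlower := integral_le_eint
    (u := fun x => f x * Q.rnDeriv P x - (φ (Q.rnDeriv P x)).toReal) (hfq.sub hd) hfenchel
  rw [integral_sub hfq hd, ← sint_eq_integral_mul_rnDeriv hac hf] at hlower
  calc ((sint Q f : ℝ) : EReal) - eint P (fun x => conjE φ (f x))
      ≤ (sint Q f : EReal) - ((sint Q f - ∫ x, (φ (Q.rnDeriv P x)).toReal ∂P : ℝ) : EReal) :=
        EReal.sub_le_sub le_rfl hlower
    _ = div φ Q P := by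
        rw [coe_div_eq_integral hφ hfin, ← EReal.coe_sub, sub_sub_cancel]

theorem sint_sub_eint_conjE_deriv_eq_div {φ' : ℝ → ℝ} (hφ : Measurable φ)
    (hconv : ConvexOn ℝ≥0 univ φ)
    (hderiv : ∀ x ∈ {y : ℝ | φ y ≠ ⊤},
      HasDerivWithinAt (fun y => (φ y).toReal) (φ' x) {y : ℝ | φ y ≠ ⊤} x)
    (hac : Q ≪ᵥ P.toENNRealVectorMeasure) (hfin : div φ Q P ≠ ⊤)
    (hint : Integrable (fun x => φ' (Q.rnDeriv P x)) Q.totalVariation) :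
    ((sint Q (fun x => φ' (Q.rnDeriv P x)) : ℝ) : EReal) -
      eint P (fun x => conjE φ (φ' (Q.rnDeriv P x))) = div φ Q P := by
  have hd := integrable_toReal_comp_rnDeriv hφ hfin
  have hfq := integrable_mul_rnDeriv hac hint
  have hyoung : ∀ᵐ x ∂P,
      conjE φ (φ' (Q.rnDeriv P x)) =
        ((φ' (Q.rnDeriv P x) * Q.rnDeriv P x - (φ (Q.rnDeriv P x)).toReal : ℝ) : EReal) :=
    (ae_ne_top_of_div_ne_top hφ hfin).mono fun _ hx =>
      conjE_eq_of_hasDerivWithinAt hconv hx (hderiv _ hx)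
  rw [eint_eq_integral
      (u := fun x => φ' (Q.rnDeriv P x) * Q.rnDeriv P x - (φ (Q.rnDeriv P x)).toReal)
      (hfq.sub hd) hyoung, integral_sub hfq hd,
    ← sint_eq_integral_mul_rnDeriv hac hint, coe_div_eq_integral hφ hfin, ← EReal.coe_sub,
    sub_sub_cancel]

end Duality

theorem stmt18_general (P : Measure X) [IsProbabilityMeasure P]
    (φ : ℝ → ℝ≥0∞) (φ' : ℝ → ℝ) (hφ'm : Measurable φ')
    (hconv : ConvexOn ℝ≥0 Set.univ φ)
    (hlsc : LowerSemicontinuous φ)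
    (hderiv : ∀ x ∈ {y : ℝ | φ y ≠ ⊤},
      HasDerivWithinAt (fun y => (φ y).toReal) (φ' x) {y : ℝ | φ y ≠ ⊤} x)
    (Q : SignedMeasure X) (hac : Q ≪ᵥ P.toENNRealVectorMeasure)
    (hfin : div φ Q P ≠ ⊤)
    (hint : Integrable (fun x => φ' (Q.rnDeriv P x)) Q.totalVariation) :
    ((sint Q (fun x => φ' (Q.rnDeriv P x)) : ℝ) : EReal) -
        eint P (fun x => conjE φ (φ' (Q.rnDeriv P x))) = ((div φ Q P : ℝ≥0∞) : EReal) ∧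
    (∀ f : X → ℝ, Measurable f → Integrable f Q.totalVariation →
      ((sint Q f : ℝ) : EReal) - eint P (fun x => conjE φ (f x)) ≤
        ((div φ Q P : ℝ≥0∞) : EReal)) ∧
    ((div φ Q P : ℝ≥0∞) : EReal) =
      ⨆ f : {f : X → ℝ // Measurable f ∧ Integrable f Q.totalVariation},
        (((sint Q f.1 : ℝ) : EReal) - eint P (fun x => conjE φ (f.1 x))) := by
  have hφ : Measurable φ := hlsc.measurable
  have hattain := sint_sub_eint_conjE_deriv_eq_div hφ hconv hderiv hac hfin hint
  have hbound : ∀ f : X → ℝ, Measurable f → Integrable f Q.totalVariation →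
      ((sint Q f : ℝ) : EReal) - eint P (fun x => conjE φ (f x)) ≤ div φ Q P :=
    fun _ _ hf => sint_sub_eint_conjE_le_div hφ hac hfin hf
  refine ⟨hattain, hbound, le_antisymm ?_ (iSup_le fun f => hbound f.1 f.2.1 f.2.2)⟩
  exact le_iSup_of_le ⟨_, hφ'm.comp (SignedMeasure.measurable_rnDeriv Q P), hint⟩ hattain.ge

/-- (Dual representation / one-point attainment.)  Let `φ` be proper closed
convex with `φ 1 = 0`, differentiable on its domain, and `Q ≪ P` with `φ(Q,P) < ∞` and
`∫ |φ'(q)| d|Q| < ∞`, where `q = dQ/dP`.  Then with `f̄ = φ'(q)` one has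
`∫ f̄ dQ − ∫ φ*(f̄) dP = φ(Q,P)`; for every measurable `f` with `∫ |f| d|Q| < ∞` one has
`∫ f dQ − ∫ φ*(f) dP ≤ φ(Q,P)`; hence `φ(Q,P)` equals the supremum of these quantities,
attained at `f̄`. -/
theorem stmt18 (P : Measure X) [IsProbabilityMeasure P]
    (φ : ℝ → ℝ≥0∞) (φ' : ℝ → ℝ) (hφ'm : Measurable φ')
    (hconv : ConvexOn ℝ≥0 Set.univ φ)
    (hlsc : LowerSemicontinuous φ)
    (hone : φ 1 = 0)
    (hderiv : ∀ x ∈ {y : ℝ | φ y ≠ ⊤},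
      HasDerivWithinAt (fun y => (φ y).toReal) (φ' x) {y : ℝ | φ y ≠ ⊤} x)
    (Q : SignedMeasure X) (hac : Q ≪ᵥ P.toENNRealVectorMeasure)
    (hfin : div φ Q P ≠ ⊤)
    (hint : Integrable (fun x => φ' (Q.rnDeriv P x)) Q.totalVariation) :
    ((sint Q (fun x => φ' (Q.rnDeriv P x)) : ℝ) : EReal) -
        eint P (fun x => conjE φ (φ' (Q.rnDeriv P x))) = ((div φ Q P : ℝ≥0∞) : EReal) ∧
    (∀ f : X → ℝ, Measurable f → Integrable f Q.totalVariation →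
      ((sint Q f : ℝ) : EReal) - eint P (fun x => conjE φ (f x)) ≤
        ((div φ Q P : ℝ≥0∞) : EReal)) ∧
    ((div φ Q P : ℝ≥0∞) : EReal) =
      ⨆ f : {f : X → ℝ // Measurable f ∧ Integrable f Q.totalVariation},
        (((sint Q f.1 : ℝ) : EReal) - eint P (fun x => conjE φ (f.1 x))) :=
  stmt18_general P φ φ' hφ'm hconv hlsc hderiv Q hac hfin hint
end
end
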